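/- Consider a platoon of N ≥ 1 unicycle vehicles indexed i = 1, …, N following a leader indexed 0. Let 0 < d_col < d_{i,des} < d_con for all i, 0 < β_con < π/2, and set M̲_{d_i} = d_{i,des} − d_col, M̄_{d_i} = d_con − d_{i,des}. Let ρ_{d_i}(t) = (1 − ρ_{d,∞}/max{M̲_{d_i}, M̄_{d_i}})e^{−l_d t} + ρ_{d,∞}/max{M̲_{d_i}, M̄_{d_i}} and ρ_{β_i}(t) = (1 − ρ_{β,∞}/β_con)e^{−l_β t} + ρ_{β,∞}/β_con with l_d, l_β > 0, 0 < ρ_{d,∞} < max{M̲_{d_i}, M̄_{d_i}} for all i and 0 < ρ_{β,∞} < β_con. Suppose x_i, y_i, φ_i : [0,∞) → ℝ (i = 0, 1, …, N) are differentiable with x_i'(t) = v_i(t) cos φ_i(t), y_i'(t) = v_i(t) sin φ_i(t), φ_i'(t) = ω_i(t), where v_0, ω_0 are bounded on [0,∞), and for i = 1, …, N there exist differentiable d_i, β_i : [0,∞) → ℝ with d_i(t) > 0, x_{i−1} − x_i = d_i cos(φ_i + β_i), y_{i−1} − y_i = d_i sin(φ_i + β_i), and the control laws v_i(t) = k_{d_i}·ε_{M̲_{d_i},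 M̄_{d_i}}((d_i(t) − d_{i,des})/ρ_{d_i}(t)) and ω_i(t) = (k_{β_i}/ρ_{β_i}(t))·r_{β_con,β_con}(β_i(t)/ρ_{β_i}(t))·ε_{β_con,β_con}(β_i(t)/ρ_{β_i}(t)) hold with gains k_{d_i}, k_{β_i} > 0. If initially d_col < d_i(0) < d_con and |β_i(0)| < β_con for all i = 1, …, N, then for all t ≥ 0 and all i = 1, …, N: −M̲_{d_i}·ρ_{d_i}(t) < d_i(t) − d_{i,des} < M̄_{d_i}·ρ_{d_i}(t) and −β_con·ρ_{β_i}(t) < β_i(t) < β_con·ρ_{β_i}(t); in particular d_col < d_i(t) < d_con and |β_i(t)| < β_con for all t ≥ 0. -/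

import Mathlib

/-- The transformed error ε_{a,b}(x) = log((1 + x/a)/(1 − x/b)). -/
noncomputable def epsErr (a b x : ℝ) : ℝ := Real.log ((1 + x / a) / (1 - x / b))

/-- The gain function r_{a,b}(x) = (1/a + 1/b)/((1 + x/a)(1 − x/b)). -/
noncomputable def gainFn (a b x : ℝ) : ℝ :=
  (1 / a + 1 / b) / ((1 + x / a) * (1 - x / b))

/-- The performance function ρ(t) = (1 − ρ_∞/M)e^{−l t} + ρ_∞/M. -/
noncomputable def perfFn (l ρ_inf M t : ℝ) : ℝ :=
  (1 - ρ_inf / M) * Real.exp (-l * t) + ρ_inf / M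

/-!
Write ξ = (d − d_des)/ρ_d and ζ = β/ρ_β for the normalised errors of a follower. The
predecessor's speed enters the dynamics of (d, β) only through terms that stay bounded on
bounded time intervals, whereas the control terms k_d ε(ξ) cos β and (k_β/ρ_β) r(ζ) ε(ζ) blow
up at the edges of the prescribed box and point inwards. So at a first exit time the error
would have to reach an edge while its derivative points strictly inwards: there is no exit.
Inside the box the follower's own speed k_d ε(ξ) is continuous, hence locally bounded, which is
all its follower needs; induction along the platoon finishes the proof.
-/

open Real Set Filter Topology Asymptotics

theorem lt_zero_of_eventually_hasDerivAt_neg {g g' : ℝ → ℝ} {T : ℝ}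
    (hc : ContinuousWithinAt g (Iic T) T)
    (hd : ∀ᶠ t in 𝓝[<] T, HasDerivAt g (g' t) t ∧ g' t < 0)
    (hg : ∀ᶠ t in 𝓝[<] T, g t ≤ 0) : g T < 0 := by
  obtain ⟨t₀, ht₀T, hsub⟩ := mem_nhdsLT_iff_exists_Ioo_subset.1 (hd.and hg)
  obtain ⟨t₁, ht₀₁, ht₁T⟩ := exists_between (mem_Iio.1 ht₀T)
  have hanti : StrictAntiOn g (Icc t₁ T) := by
    refine strictAntiOn_of_hasDerivWithinAt_neg (convex_Icc t₁ T) ?_ ?_ ?_ (f' := g')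
    · intro t ht
      rcases ht.2.eq_or_lt with rfl | htT
      · exact hc.mono Icc_subset_Iic_self
      · exact (hsub ⟨ht₀₁.trans_le ht.1, htT⟩).1.1.continuousAt.continuousWithinAt
    · rw [interior_Icc]
      exact fun t ht => (hsub ⟨ht₀₁.trans ht.1, ht.2⟩).1.1.hasDerivWithinAt
    · rw [interior_Icc]
      exact fun t ht => (hsub ⟨ht₀₁.trans ht.1, ht.2⟩).1.2
  calc g T < g t₁ := hanti ⟨le_rfl, ht₁T.le⟩ ⟨ht₁T.le, le_rfl⟩ ht₁T
    _ ≤ 0 := (hsub ⟨ht₀₁, ht₁T⟩).2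

theorem mem_of_forall_Ico_mem {α X : Type*} [ConditionallyCompleteLinearOrder α]
    [TopologicalSpace α] [OrderTopology α] [TopologicalSpace X] {γ : α → X} {U : Set X} {a : α}
    (hU : IsOpen U) (hγ : ContinuousOn γ (Ici a))
    (hstep : ∀ T, a ≤ T → (∀ t ∈ Ico a T, γ t ∈ U) → γ T ∈ U) {t : α} (ht : a ≤ t) :
    γ t ∈ U := by
  by_contra hbad
  have hS : IsClosed (Ici a ∩ γ ⁻¹' Uᶜ) :=
    hγ.preimage_isClosed_of_isClosed isClosed_Ici hU.isClosed_compl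
  have hbdd : BddBelow (Ici a ∩ γ ⁻¹' Uᶜ) := ⟨a, fun s hs => hs.1⟩
  obtain ⟨haT, hT⟩ := hS.csInf_mem ⟨t, ht, hbad⟩ hbdd
  exact hT <| hstep _ haT fun s hs => by_contra fun h => (csInf_le hbdd ⟨hs.1, h⟩).not_gt hs.2

theorem epsErr_neg (a b x : ℝ) : epsErr b a (-x) = -epsErr a b x := by
  rw [epsErr, epsErr, ← Real.log_inv, inv_div]
  congr 1
  ring

theorem continuousAt_epsErr {a b x : ℝ} (ha : 0 < a) (hb : 0 < b) (hx : x ∈ Ioo (-a) b) :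
    ContinuousAt (epsErr a b) x := by
  have hnum : 0 < 1 + x / a := by
    rw [one_add_div ha.ne']
    exact div_pos (by linarith [hx.1]) ha
  have hden : 0 < 1 - x / b := by
    rw [one_sub_div hb.ne']
    exact div_pos (by linarith [hx.2]) hb
  exact ((continuousAt_const.add (continuousAt_id.div_const a)).div
    (continuousAt_const.sub (continuousAt_id.div_const b)) hden.ne').log (div_pos hnum hden).ne'

theorem tendsto_epsErr_atTop {a b : ℝ} (ha : 0 < a) (hb : 0 < b) :
    Tendsto (epsErr a b) (𝓝[<] b) atTop := by
  have hnum : Tendsto (fun x => 1 + x / a) (𝓝[<] b) (𝓝 (1 + b / a)) :=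
    ((by fun_prop : Continuous fun x : ℝ => 1 + x / a).tendsto b).mono_left nhdsWithin_le_nhds
  have hden : Tendsto (fun x => 1 - x / b) (𝓝[<] b) (𝓝[>] 0) := by
    refine tendsto_nhdsWithin_iff.2 ⟨?_, ?_⟩
    · have := ((by fun_prop : Continuous fun x : ℝ => 1 - x / b).tendsto b).mono_left
        (nhdsWithin_le_nhds (s := Iio b))
      simpa [div_self hb.ne'] using this
    · filter_upwards [self_mem_nhdsWithin] with x hx
      rw [mem_Ioi, sub_pos, div_lt_one hb]
      exact hx
  have := hnum.pos_mul_atTop (by positivity) (tendsto_inv_nhdsGT_zero.comp hden)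
  exact Real.tendsto_log_atTop.comp (by simpa [Function.comp_def, div_eq_mul_inv] using this)

theorem four_div_add_le_gainFn {a b x : ℝ} (ha : 0 < a) (hb : 0 < b) (hx : x ∈ Ioo (-a) b) :
    4 / (a + b) ≤ gainFn a b x := by
  have hax : 0 < a + x := by linarith [hx.1]
  have hbx : 0 < b - x := by linarith [hx.2]
  have hr : gainFn a b x = (a + b) / ((a + x) * (b - x)) := by
    rw [gainFn]
    field_simp
    ring
  rw [hr, div_le_div_iff₀ (by positivity) (by positivity)]
  nlinarith [sq_nonneg (a - b + 2 * x)]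

theorem perfFn_pos {l ρi M : ℝ} (h₀ : 0 < ρi) (h₁ : ρi ≤ M) (t : ℝ) :
    0 < perfFn l ρi M t := by
  have hc : ρi / M ≤ 1 := div_le_one_of_le₀ h₁ (h₀.trans_le h₁).le
  have : 0 < ρi / M := div_pos h₀ (h₀.trans_le h₁)
  unfold perfFn
  nlinarith [exp_pos (-l * t)]

theorem perfFn_le_one {l ρi M t : ℝ} (h₀ : 0 < ρi) (h₁ : ρi ≤ M) (hl : 0 ≤ l) (ht : 0 ≤ t) :
    perfFn l ρi M t ≤ 1 := by
  have hc : ρi / M ≤ 1 := div_le_one_of_le₀ h₁ (h₀.trans_le h₁).le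
  have : exp (-l * t) ≤ 1 := exp_le_one_iff.2 (by nlinarith)
  unfold perfFn
  nlinarith

theorem perfFn_zero (l ρi M : ℝ) : perfFn l ρi M 0 = 1 := by
  simp [perfFn]

theorem contDiff_perfFn (l ρi M : ℝ) {n : WithTop ℕ∞} : ContDiff ℝ n (perfFn l ρi M) := by
  unfold perfFn
  fun_prop

theorem div_lt_of_funnel {e ρ F K : ℝ → ℝ} {a b κ T : ℝ} (ha : 0 < a) (hb : 0 < b) (hκ : 0 < κ)
    (hρ : ContDiff ℝ 1 ρ) (hρT : 0 < ρ T) (he : ContinuousWithinAt e (Iic T) T)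
    (hde : ∀ᶠ t in 𝓝[<] T, HasDerivAt e (F t - K t * epsErr a b (e t / ρ t)) t)
    (hF : F =O[𝓝[<] T] fun _ => (1 : ℝ)) (hK : ∀ᶠ t in 𝓝[<] T, κ ≤ K t)
    (hlt : ∀ᶠ t in 𝓝[<] T, e t / ρ t < b) : e T / ρ T < b := by
  have hρc : ContinuousWithinAt ρ (Iic T) T := hρ.continuous.continuousWithinAt
  have hξ : Tendsto (fun t => e t / ρ t) (𝓝[<] T) (𝓝 (e T / ρ T)) :=
    ((he.div hρc hρT.ne').mono Iio_subset_Iic_self).tendsto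
  refine (le_of_tendsto hξ (hlt.mono fun t => le_of_lt)).lt_of_ne fun hξT => ?_
  have hε : Tendsto (fun t => epsErr a b (e t / ρ t)) (𝓝[<] T) atTop :=
    (tendsto_epsErr_atTop ha hb).comp (tendsto_nhdsWithin_iff.2 ⟨hξT ▸ hξ, hlt⟩)
  obtain ⟨C, hC⟩ : ∃ C, ∀ᶠ t in 𝓝[<] T, F t - b * deriv ρ t ≤ C := by
    have hρ' : deriv ρ =O[𝓝[<] T] fun _ => (1 : ℝ) :=
      ((hρ.continuous_deriv le_rfl).continuousAt.tendsto.mono_left nhdsWithin_le_nhds).isBigO_one ℝ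
    obtain ⟨C, hC⟩ := ((isBigO_one_iff ℝ).1 (hF.sub (hρ'.const_mul_left b))).eventually_le
    exact ⟨C, hC.mono fun t ht => (le_abs_self _).trans ht⟩
  have hρpos : ∀ᶠ t in 𝓝[<] T, 0 < ρ t :=
    nhdsWithin_le_nhds (hρ.continuous.continuousAt.eventually (lt_mem_nhds hρT))
  have hg : e T - b * ρ T < 0 := by
    refine lt_zero_of_eventually_hasDerivAt_neg (g := fun t => e t - b * ρ t)
      (g' := fun t => F t - K t * epsErr a b (e t / ρ t) - b * deriv ρ t)
      (he.sub (hρc.const_mul b)) ?_ ?_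
    · filter_upwards [hde, hC, hK, hε.eventually_ge_atTop 0, hε.eventually_ge_atTop ((C + 1) / κ)]
        with t hdt hCt hKt hε₀ hεC
      refine ⟨hdt.sub (((hρ.differentiable one_ne_zero) t).hasDerivAt.const_mul b), ?_⟩
      have : C + 1 ≤ K t * epsErr a b (e t / ρ t) :=
        ((div_le_iff₀' hκ).1 hεC).trans (mul_le_mul_of_nonneg_right hKt hε₀)
      linarith
    · filter_upwards [hlt, hρpos] with t ht hρt
      linarith [(div_lt_iff₀ hρt).1 ht]
  linarith [(div_eq_iff hρT.ne').1 hξT]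

theorem div_mem_Ioo_of_funnel {e ρ F K : ℝ → ℝ} {a b κ T : ℝ} (ha : 0 < a) (hb : 0 < b)
    (hκ : 0 < κ) (hρ : ContDiff ℝ 1 ρ) (hρT : 0 < ρ T) (he : ContinuousWithinAt e (Iic T) T)
    (hde : ∀ᶠ t in 𝓝[<] T, HasDerivAt e (F t - K t * epsErr a b (e t / ρ t)) t)
    (hF : F =O[𝓝[<] T] fun _ => (1 : ℝ)) (hK : ∀ᶠ t in 𝓝[<] T, κ ≤ K t)
    (hin : ∀ᶠ t in 𝓝[<] T, e t / ρ t ∈ Ioo (-a) b) : e T / ρ T ∈ Ioo (-a) b := by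
  refine ⟨?_, div_lt_of_funnel ha hb hκ hρ hρT he hde hF hK (hin.mono fun _ h => h.2)⟩
  -- the lower edge is the upper edge for `-e`, since `ε_{b,a}(-x) = -ε_{a,b}(x)`
  have := div_lt_of_funnel (e := -e) (F := -F) hb ha hκ hρ hρT he.neg
    (hde.mono fun t h => h.neg.congr_deriv
      (by rw [Pi.neg_apply, Pi.neg_apply, neg_div, epsErr_neg]; ring))
    hF.neg_left hK
    (hin.mono fun t h => by simpa [neg_div] using neg_lt_neg h.1)
  simpa [neg_div] using neg_lt_neg this

theorem hasDerivWithinAt_polar {r θ p q : ℝ → ℝ} {p' q' t : ℝ} {s : Set ℝ}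
    (hs : UniqueDiffWithinAt ℝ s t) (ht : t ∈ s)
    (hp : HasDerivWithinAt p p' s t) (hq : HasDerivWithinAt q q' s t)
    (hr : DifferentiableWithinAt ℝ r s t) (hθ : DifferentiableWithinAt ℝ θ s t) (hr0 : r t ≠ 0)
    (hpr : ∀ τ ∈ s, p τ = r τ * cos (θ τ)) (hqr : ∀ τ ∈ s, q τ = r τ * sin (θ τ)) :
    HasDerivWithinAt r (p' * cos (θ t) + q' * sin (θ t)) s t ∧
      HasDerivWithinAt θ ((q' * cos (θ t) - p' * sin (θ t)) / r t) s t := by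
  set r' := derivWithin r s t
  set θ' := derivWithin θ s t
  have hp' : p' = r' * cos (θ t) + r t * (-sin (θ t) * θ') :=
    hs.eq_deriv _ hp ((hr.hasDerivWithinAt.mul hθ.hasDerivWithinAt.cos).congr hpr (hpr t ht))
  have hq' : q' = r' * sin (θ t) + r t * (cos (θ t) * θ') :=
    hs.eq_deriv _ hq ((hr.hasDerivWithinAt.mul hθ.hasDerivWithinAt.sin).congr hqr (hqr t ht))
  have hpy := sin_sq_add_cos_sq (θ t)
  refine ⟨hr.hasDerivWithinAt.congr_deriv ?_, hθ.hasDerivWithinAt.congr_deriv ?_⟩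
  · linear_combination -cos (θ t) * hp' - sin (θ t) * hq' - r' * hpy
  · rw [eq_div_iff hr0]
    linear_combination sin (θ t) * hp' - cos (θ t) * hq' - r t * θ' * hpy

theorem hasDerivWithinAt_dist_bearing {x₁ y₁ φ₁ x₂ y₂ φ₂ d β : ℝ → ℝ} {u v ω t : ℝ}
    {s : Set ℝ} (hs : UniqueDiffWithinAt ℝ s t) (ht : t ∈ s)
    (hx₁ : HasDerivWithinAt x₁ (u * cos (φ₁ t)) s t)
    (hy₁ : HasDerivWithinAt y₁ (u * sin (φ₁ t)) s t)
    (hx₂ : HasDerivWithinAt x₂ (v * cos (φ₂ t)) s t)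
    (hy₂ : HasDerivWithinAt y₂ (v * sin (φ₂ t)) s t) (hφ₂ : HasDerivWithinAt φ₂ ω s t)
    (hd : DifferentiableWithinAt ℝ d s t) (hβ : DifferentiableWithinAt ℝ β s t) (hd0 : d t ≠ 0)
    (hgx : ∀ τ ∈ s, x₁ τ - x₂ τ = d τ * cos (φ₂ τ + β τ))
    (hgy : ∀ τ ∈ s, y₁ τ - y₂ τ = d τ * sin (φ₂ τ + β τ)) :
    HasDerivWithinAt d (u * cos (φ₁ t - (φ₂ t + β t)) - v * cos (β t)) s t ∧
      HasDerivWithinAt β ((u * sin (φ₁ t - (φ₂ t + β t)) + v * sin (β t)) / d t - ω) s t := by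
  obtain ⟨hd', hθ'⟩ := hasDerivWithinAt_polar (θ := fun τ => φ₂ τ + β τ) hs ht
    (hx₁.sub hx₂) (hy₁.sub hy₂) hd (hφ₂.differentiableWithinAt.add hβ) hd0 hgx hgy
  have hβ' := (hθ'.sub hφ₂).congr (f₁ := β) (fun τ _ => by simp) (by simp)
  have hcos : cos (β t) = cos (φ₂ t + β t) * cos (φ₂ t) + sin (φ₂ t + β t) * sin (φ₂ t) := by
    rw [← cos_sub, add_sub_cancel_left]
  have hsin : sin (β t) = sin (φ₂ t + β t) * cos (φ₂ t) - cos (φ₂ t + β t) * sin (φ₂ t) := by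
    rw [← sin_sub, add_sub_cancel_left]
  refine ⟨hd'.congr_deriv ?_, hβ'.congr_deriv ?_⟩
  · rw [cos_sub, hcos]
    ring
  · rw [sin_sub, hsin]
    ring

theorem div_mem_Ioo_iff {x ρ a b : ℝ} (hρ : 0 < ρ) :
    x / ρ ∈ Ioo (-a) b ↔ -a * ρ < x ∧ x < b * ρ := by
  rw [mem_Ioo, lt_div_iff₀ hρ, div_lt_iff₀ hρ]

theorem mem_Ioo_of_div_mem_Ioo {x ρ a b : ℝ} (ha : 0 ≤ a) (hb : 0 ≤ b) (hρ : 0 < ρ)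
    (hρ₁ : ρ ≤ 1) (h : x / ρ ∈ Ioo (-a) b) : x ∈ Ioo (-a) b := by
  rw [div_mem_Ioo_iff hρ] at h
  constructor <;> nlinarith [h.1, h.2]

theorem isBigO_one_of_eq_mul_epsErr {V ξ : ℝ → ℝ} {a b k T : ℝ} (ha : 0 < a) (hb : 0 < b)
    (hξ : ContinuousAt ξ T) (hξT : ξ T ∈ Ioo (-a) b)
    (hV : ∀ᶠ t in 𝓝 T, V t = k * epsErr a b (ξ t)) : V =O[𝓝 T] fun _ => (1 : ℝ) :=
  ((tendsto_const_nhds.mul ((continuousAt_epsErr ha hb hξT).comp hξ)).isBigO_one ℝ).congr'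
    (hV.mono fun _ h => h.symm) EventuallyEq.rfl

theorem isBigO_mul_of_norm_le_one {α : Type*} {l : Filter α} {f g k : α → ℝ}
    (hf : f =O[l] k) (hg : ∀ x, ‖g x‖ ≤ 1) : (fun x => f x * g x) =O[l] k :=
  (isBigO_of_le _ fun x => by
    rw [norm_mul]
    exact mul_le_of_le_one_right (norm_nonneg _) (hg x)).trans hf

section Follower

variable {a b c kd kβ ddes T : ℝ} {ρd ρβ d β A B V W : ℝ → ℝ}

theorem distErr_mem_Ioo_of_eventually (ha : 0 < a) (hb : 0 < b) (hc : 0 < c)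
    (hcπ : c < π / 2) (hkd : 0 < kd) (hρd : ContDiff ℝ 1 ρd) (hρd₀ : ∀ t, 0 < ρd t)
    (hρβ₀ : ∀ t, 0 < ρβ t) (hρβ₁ : ∀ t, 0 ≤ t → ρβ t ≤ 1)
    (hV : ∀ t, 0 ≤ t → V t = kd * epsErr a b ((d t - ddes) / ρd t))
    (hd' : ∀ t, 0 < t → HasDerivAt d (A t - V t * cos (β t)) t)
    (hT : 0 < T) (hA : A =O[𝓝[<] T] fun _ => (1 : ℝ))
    (hnear : ∀ᶠ t in 𝓝[<] T,
      0 < t ∧ (d t - ddes) / ρd t ∈ Ioo (-a) b ∧ β t / ρβ t ∈ Ioo (-c) c) :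
    (d T - ddes) / ρd T ∈ Ioo (-a) b := by
  have hcos : 0 < cos c := cos_pos_of_mem_Ioo ⟨by linarith [pi_pos], hcπ⟩
  refine div_mem_Ioo_of_funnel (e := fun t => d t - ddes) (K := fun t => kd * cos (β t))
    ha hb (mul_pos hkd hcos) hρd (hρd₀ T)
    ((hd' T hT).continuousAt.continuousWithinAt.sub continuousWithinAt_const) ?_ hA ?_
    (hnear.mono fun t h => h.2.1)
  · filter_upwards [hnear] with t ht
    exact ((hd' t ht.1).sub_const ddes).congr_deriv (by rw [hV t ht.1.le]; ring)
  · filter_upwards [hnear] with t ⟨ht, _, hζ⟩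
    have hβc := mem_Ioo_of_div_mem_Ioo hc.le hc.le (hρβ₀ t) (hρβ₁ t ht.le) hζ
    refine mul_le_mul_of_nonneg_left ?_ hkd.le
    rw [← cos_abs (β t)]
    exact cos_le_cos_of_nonneg_of_le_pi (abs_nonneg _) (by linarith [pi_pos]) (abs_lt.2 hβc).le

theorem bearingErr_mem_Ioo_of_eventually (hc : 0 < c) (hkβ : 0 < kβ) (hρβ : ContDiff ℝ 1 ρβ)
    (hρβ₀ : ∀ t, 0 < ρβ t) (hρβ₁ : ∀ t, 0 ≤ t → ρβ t ≤ 1)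
    (hW : ∀ t, 0 ≤ t →
      W t = kβ / ρβ t * gainFn c c (β t / ρβ t) * epsErr c c (β t / ρβ t))
    (hβ' : ∀ t, 0 < t → HasDerivAt β ((B t + V t * sin (β t)) / d t - W t) t)
    (hT : 0 < T) (hdT : ContinuousAt d T) (hdT₀ : 0 < d T)
    (hB : B =O[𝓝[<] T] fun _ => (1 : ℝ)) (hV : V =O[𝓝[<] T] fun _ => (1 : ℝ))
    (hnear : ∀ᶠ t in 𝓝[<] T, 0 < t ∧ β t / ρβ t ∈ Ioo (-c) c) :
    β T / ρβ T ∈ Ioo (-c) c := by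
  have hinv : (fun t => (d t)⁻¹) =O[𝓝[<] T] fun _ => (1 : ℝ) :=
    ((hdT.inv₀ hdT₀.ne').tendsto.mono_left nhdsWithin_le_nhds).isBigO_one ℝ
  have hF : (fun t => (B t + V t * sin (β t)) / d t) =O[𝓝[<] T] fun _ => (1 : ℝ) := by
    simpa [div_eq_mul_inv] using
      (hB.add (isBigO_mul_of_norm_le_one hV fun t => abs_sin_le_one _)).mul hinv
  refine div_mem_Ioo_of_funnel (K := fun t => kβ / ρβ t * gainFn c c (β t / ρβ t))
    (κ := kβ * (4 / (c + c))) hc hc (by positivity) hρβ (hρβ₀ T)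
    (hβ' T hT).continuousAt.continuousWithinAt ?_ hF ?_ (hnear.mono fun t h => h.2)
  · filter_upwards [hnear] with t ht
    exact (hβ' t ht.1).congr_deriv (by rw [hW t ht.1.le])
  · filter_upwards [hnear] with t ⟨ht, hζ⟩
    exact mul_le_mul (le_div_self hkβ.le (hρβ₀ t) (hρβ₁ t ht.le))
      (four_div_add_le_gainFn hc hc hζ) (by positivity) (div_pos hkβ (hρβ₀ t)).le

theorem follower_funnel (ha : 0 < a) (hb : 0 < b) (hc : 0 < c) (hcπ : c < π / 2)
    (hkd : 0 < kd) (hkβ : 0 < kβ) (hρd : ContDiff ℝ 1 ρd) (hρβ : ContDiff ℝ 1 ρβ)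
    (hρd₀ : ∀ t, 0 < ρd t) (hρβ₀ : ∀ t, 0 < ρβ t) (hρβ₁ : ∀ t, 0 ≤ t → ρβ t ≤ 1)
    (hd₀ : ∀ t, 0 ≤ t → 0 < d t)
    (hA : ∀ T, 0 < T → A =O[𝓝[<] T] fun _ => (1 : ℝ))
    (hB : ∀ T, 0 < T → B =O[𝓝[<] T] fun _ => (1 : ℝ))
    (hV : ∀ t, 0 ≤ t → V t = kd * epsErr a b ((d t - ddes) / ρd t))
    (hW : ∀ t, 0 ≤ t →
      W t = kβ / ρβ t * gainFn c c (β t / ρβ t) * epsErr c c (β t / ρβ t))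
    (hd' : ∀ t, 0 ≤ t → HasDerivWithinAt d (A t - V t * cos (β t)) (Ici 0) t)
    (hβ' : ∀ t, 0 ≤ t →
      HasDerivWithinAt β ((B t + V t * sin (β t)) / d t - W t) (Ici 0) t)
    (hξ₀ : (d 0 - ddes) / ρd 0 ∈ Ioo (-a) b) (hζ₀ : β 0 / ρβ 0 ∈ Ioo (-c) c) :
    (∀ t, 0 ≤ t → (d t - ddes) / ρd t ∈ Ioo (-a) b ∧ β t / ρβ t ∈ Ioo (-c) c) ∧
      ∀ T, 0 < T → V =O[𝓝[<] T] fun _ => (1 : ℝ) := by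
  have hdT (T : ℝ) (hT : 0 < T) := (hd' T hT.le).hasDerivAt (Ici_mem_nhds hT)
  have hβT (T : ℝ) (hT : 0 < T) := (hβ' T hT.le).hasDerivAt (Ici_mem_nhds hT)
  have hVO (T : ℝ) (hT : 0 < T) (hξT : (d T - ddes) / ρd T ∈ Ioo (-a) b) :
      V =O[𝓝[<] T] fun _ => (1 : ℝ) :=
    (isBigO_one_of_eq_mul_epsErr ha hb (((hdT T hT).continuousAt.sub continuousAt_const).div
      hρd.continuous.continuousAt (hρd₀ T).ne') hξT
      (Filter.mem_of_superset (Ici_mem_nhds hT) fun t ht => hV t ht)).mono nhdsWithin_le_nhds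
  have hfunnel (t : ℝ) (ht : 0 ≤ t) :
      (d t - ddes) / ρd t ∈ Ioo (-a) b ∧ β t / ρβ t ∈ Ioo (-c) c := by
    refine mem_of_forall_Ico_mem (γ := fun t => ((d t - ddes) / ρd t, β t / ρβ t))
      (isOpen_Ioo.prod isOpen_Ioo) (fun t ht => ?_) (fun T hT hbefore => ?_) ht
    · exact (((hd' t ht).continuousWithinAt.sub continuousWithinAt_const).div
        hρd.continuous.continuousWithinAt (hρd₀ t).ne').prodMk
        ((hβ' t ht).continuousWithinAt.div hρβ.continuous.continuousWithinAt (hρβ₀ t).ne')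
    rcases hT.eq_or_lt with rfl | hT
    · exact ⟨hξ₀, hζ₀⟩
    have hnear : ∀ᶠ t in 𝓝[<] T, 0 < t ∧ (d t - ddes) / ρd t ∈ Ioo (-a) b ∧
        β t / ρβ t ∈ Ioo (-c) c :=
      Filter.mem_of_superset (Ioo_mem_nhdsLT hT) fun t h => ⟨h.1, hbefore t ⟨h.1.le, h.2⟩⟩
    have hξT := distErr_mem_Ioo_of_eventually ha hb hc hcπ hkd hρd hρd₀ hρβ₀ hρβ₁ hV hdT hT
      (hA T hT) hnear
    exact ⟨hξT, bearingErr_mem_Ioo_of_eventually hc hkβ hρβ hρβ₀ hρβ₁ hW hβT hT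
      (hdT T hT).continuousAt (hd₀ T hT.le) (hB T hT) (hVO T hT hξT)
      (hnear.mono fun t h => ⟨h.1, h.2.2⟩)⟩
  exact ⟨hfunnel, fun T hT => hVO T hT (hfunnel T hT.le).1⟩

end Follower

theorem platoon_prescribed_performance_general
    (N : ℕ)
    (d_col d_con β_con ρd_inf ρβ_inf l_d l_β : ℝ)
    (d_des k_d k_β : ℕ → ℝ)
    (hd_des : ∀ i, 1 ≤ i → i ≤ N → d_col < d_des i ∧ d_des i < d_con)
    (hβ_con : 0 < β_con) (hβ_con' : β_con < Real.pi / 2)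
    (hl_d : 0 < l_d) (hl_β : 0 < l_β)
    (hρd : 0 < ρd_inf)
    (hρd' : ∀ i, 1 ≤ i → i ≤ N → ρd_inf < max (d_des i - d_col) (d_con - d_des i))
    (hρβ : 0 < ρβ_inf) (hρβ' : ρβ_inf < β_con)
    (hk_d : ∀ i, 1 ≤ i → i ≤ N → 0 < k_d i)
    (hk_β : ∀ i, 1 ≤ i → i ≤ N → 0 < k_β i)
    (x y φ v ω : ℕ → ℝ → ℝ)
    (hx : ∀ i, i ≤ N → ∀ t : ℝ, 0 ≤ t →
      HasDerivWithinAt (x i) (v i t * Real.cos (φ i t)) (Set.Ici (0 : ℝ)) t)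
    (hy : ∀ i, i ≤ N → ∀ t : ℝ, 0 ≤ t →
      HasDerivWithinAt (y i) (v i t * Real.sin (φ i t)) (Set.Ici (0 : ℝ)) t)
    (hφ : ∀ i, i ≤ N → ∀ t : ℝ, 0 ≤ t →
      HasDerivWithinAt (φ i) (ω i t) (Set.Ici (0 : ℝ)) t)
    (hlead : ∃ C : ℝ, ∀ t : ℝ, 0 ≤ t → |v 0 t| ≤ C ∧ |ω 0 t| ≤ C)
    (d β : ℕ → ℝ → ℝ)
    (hdiff : ∀ i, 1 ≤ i → i ≤ N → ∀ t : ℝ, 0 ≤ t →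
      DifferentiableWithinAt ℝ (d i) (Set.Ici (0 : ℝ)) t ∧
      DifferentiableWithinAt ℝ (β i) (Set.Ici (0 : ℝ)) t)
    (hdpos : ∀ i, 1 ≤ i → i ≤ N → ∀ t : ℝ, 0 ≤ t → 0 < d i t)
    (hgx : ∀ i, 1 ≤ i → i ≤ N → ∀ t : ℝ, 0 ≤ t →
      x (i - 1) t - x i t = d i t * Real.cos (φ i t + β i t))
    (hgy : ∀ i, 1 ≤ i → i ≤ N → ∀ t : ℝ, 0 ≤ t →
      y (i - 1) t - y i t = d i t * Real.sin (φ i t + β i t))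
    (hv : ∀ i, 1 ≤ i → i ≤ N → ∀ t : ℝ, 0 ≤ t →
      v i t = k_d i * epsErr (d_des i - d_col) (d_con - d_des i)
        ((d i t - d_des i) /
          perfFn l_d ρd_inf (max (d_des i - d_col) (d_con - d_des i)) t))
    (hω : ∀ i, 1 ≤ i → i ≤ N → ∀ t : ℝ, 0 ≤ t →
      ω i t = (k_β i / perfFn l_β ρβ_inf β_con t) *
        gainFn β_con β_con (β i t / perfFn l_β ρβ_inf β_con t) *
        epsErr β_con β_con (β i t / perfFn l_β ρβ_inf β_con t))
    (hinit : ∀ i, 1 ≤ i → i ≤ N →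
      (d_col < d i 0 ∧ d i 0 < d_con) ∧ |β i 0| < β_con)
    :
    ∀ i, 1 ≤ i → i ≤ N → ∀ t : ℝ, 0 ≤ t →
      (-(d_des i - d_col) *
          perfFn l_d ρd_inf (max (d_des i - d_col) (d_con - d_des i)) t <
            d i t - d_des i ∧
        d i t - d_des i <
          (d_con - d_des i) *
            perfFn l_d ρd_inf (max (d_des i - d_col) (d_con - d_des i)) t) ∧
      (-β_con * perfFn l_β ρβ_inf β_con t < β i t ∧
        β i t < β_con * perfFn l_β ρβ_inf β_con t) ∧
      (d_col < d i t ∧ d i t < d_con ∧ |β i t| < β_con) := by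
  have follower (i : ℕ) (hi : 1 ≤ i) (hiN : i ≤ N)
      (hprev : ∀ T, 0 < T → v (i - 1) =O[𝓝[<] T] fun _ => (1 : ℝ)) :
      (∀ t, 0 ≤ t →
        (d i t - d_des i) / perfFn l_d ρd_inf (max (d_des i - d_col) (d_con - d_des i)) t ∈
          Ioo (-(d_des i - d_col)) (d_con - d_des i) ∧
        β i t / perfFn l_β ρβ_inf β_con t ∈ Ioo (-β_con) β_con) ∧
      ∀ T, 0 < T → v i =O[𝓝[<] T] fun _ => (1 : ℝ) := by
    have hkin (t : ℝ) (ht : 0 ≤ t) := hasDerivWithinAt_dist_bearing (uniqueDiffOn_Ici 0 t ht) ht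
      (hx (i - 1) (by omega) t ht) (hy (i - 1) (by omega) t ht) (hx i hiN t ht) (hy i hiN t ht)
      (hφ i hiN t ht) (hdiff i hi hiN t ht).1 (hdiff i hi hiN t ht).2
      (hdpos i hi hiN t ht).ne' (hgx i hi hiN) (hgy i hi hiN)
    obtain ⟨hd₀, hβ₀⟩ := hinit i hi hiN
    exact follower_funnel (sub_pos.2 (hd_des i hi hiN).1) (sub_pos.2 (hd_des i hi hiN).2)
      hβ_con hβ_con' (hk_d i hi hiN) (hk_β i hi hiN) (contDiff_perfFn _ _ _)
      (contDiff_perfFn _ _ _) (perfFn_pos hρd (hρd' i hi hiN).le) (perfFn_pos hρβ hρβ'.le)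
      (fun t => perfFn_le_one hρβ hρβ'.le hl_β.le) (hdpos i hi hiN)
      (fun T hT => isBigO_mul_of_norm_le_one (hprev T hT) fun t => abs_cos_le_one _)
      (fun T hT => isBigO_mul_of_norm_le_one (hprev T hT) fun t => abs_sin_le_one _)
      (hv i hi hiN) (hω i hi hiN) (fun t ht => (hkin t ht).1) (fun t ht => (hkin t ht).2)
      (by rw [perfFn_zero, div_one]; constructor <;> linarith)
      (by rw [perfFn_zero, div_one]; exact abs_lt.1 hβ₀)
  have speed (i : ℕ) : i ≤ N → ∀ T, 0 < T → v i =O[𝓝[<] T] fun _ => (1 : ℝ) := by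
    induction i with
    | zero =>
      obtain ⟨C, hC⟩ := hlead
      exact fun _ T hT => IsBigO.of_bound C <| Filter.mem_of_superset (Ioo_mem_nhdsLT hT)
        fun t ht => by simpa using (hC t ht.1.le).1
    | succ i ih => exact fun hiN => (follower (i + 1) (by omega) hiN (ih (by omega))).2
  intro i hi hiN t ht
  obtain ⟨hξ, hζ⟩ := (follower i hi hiN (speed (i - 1) (by omega))).1 t ht
  have hρd_pos := perfFn_pos (l := l_d) hρd (hρd' i hi hiN).le t
  have hρβ_pos := perfFn_pos (l := l_β) hρβ hρβ'.le t
  have hd := mem_Ioo_of_div_mem_Ioo (sub_pos.2 (hd_des i hi hiN).1).le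
    (sub_pos.2 (hd_des i hi hiN).2).le hρd_pos
    (perfFn_le_one hρd (hρd' i hi hiN).le hl_d.le ht) hξ
  have hβ := mem_Ioo_of_div_mem_Ioo hβ_con.le hβ_con.le hρβ_pos
    (perfFn_le_one hρβ hρβ'.le hl_β.le ht) hζ
  rw [div_mem_Ioo_iff hρd_pos] at hξ
  rw [div_mem_Ioo_iff hρβ_pos] at hζ
  exact ⟨hξ, hζ, by linarith [hd.1], by linarith [hd.2], abs_lt.2 hβ⟩

/-- main platoon theorem. Under the decentralized
prescribed-performance control laws, the distance and bearing errors of each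
vehicle evolve strictly inside the prescribed performance envelopes for all
t ≥ 0; in particular the collision and connectivity constraints are never
violated. -/
theorem platoon_prescribed_performance
    (N : ℕ) (hN : 1 ≤ N)
    (d_col d_con β_con ρd_inf ρβ_inf l_d l_β : ℝ)
    (d_des k_d k_β : ℕ → ℝ)
    (hd_col : 0 < d_col)
    (hd_des : ∀ i, 1 ≤ i → i ≤ N → d_col < d_des i ∧ d_des i < d_con)
    (hβ_con : 0 < β_con) (hβ_con' : β_con < Real.pi / 2)
    (hl_d : 0 < l_d) (hl_β : 0 < l_β)
    (hρd : 0 < ρd_inf)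
    (hρd' : ∀ i, 1 ≤ i → i ≤ N → ρd_inf < max (d_des i - d_col) (d_con - d_des i))
    (hρβ : 0 < ρβ_inf) (hρβ' : ρβ_inf < β_con)
    (hk_d : ∀ i, 1 ≤ i → i ≤ N → 0 < k_d i)
    (hk_β : ∀ i, 1 ≤ i → i ≤ N → 0 < k_β i)
    (x y φ v ω : ℕ → ℝ → ℝ)
    (hx : ∀ i, i ≤ N → ∀ t : ℝ, 0 ≤ t →
      HasDerivWithinAt (x i) (v i t * Real.cos (φ i t)) (Set.Ici (0 : ℝ)) t)
    (hy : ∀ i, i ≤ N → ∀ t : ℝ, 0 ≤ t →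
      HasDerivWithinAt (y i) (v i t * Real.sin (φ i t)) (Set.Ici (0 : ℝ)) t)
    (hφ : ∀ i, i ≤ N → ∀ t : ℝ, 0 ≤ t →
      HasDerivWithinAt (φ i) (ω i t) (Set.Ici (0 : ℝ)) t)
    (hlead : ∃ C : ℝ, ∀ t : ℝ, 0 ≤ t → |v 0 t| ≤ C ∧ |ω 0 t| ≤ C)
    (d β : ℕ → ℝ → ℝ)
    (hdiff : ∀ i, 1 ≤ i → i ≤ N → ∀ t : ℝ, 0 ≤ t →
      DifferentiableWithinAt ℝ (d i) (Set.Ici (0 : ℝ)) t ∧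
      DifferentiableWithinAt ℝ (β i) (Set.Ici (0 : ℝ)) t)
    (hdpos : ∀ i, 1 ≤ i → i ≤ N → ∀ t : ℝ, 0 ≤ t → 0 < d i t)
    (hgx : ∀ i, 1 ≤ i → i ≤ N → ∀ t : ℝ, 0 ≤ t →
      x (i - 1) t - x i t = d i t * Real.cos (φ i t + β i t))
    (hgy : ∀ i, 1 ≤ i → i ≤ N → ∀ t : ℝ, 0 ≤ t →
      y (i - 1) t - y i t = d i t * Real.sin (φ i t + β i t))
    (hv : ∀ i, 1 ≤ i → i ≤ N → ∀ t : ℝ, 0 ≤ t →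
      v i t = k_d i * epsErr (d_des i - d_col) (d_con - d_des i)
        ((d i t - d_des i) /
          perfFn l_d ρd_inf (max (d_des i - d_col) (d_con - d_des i)) t))
    (hω : ∀ i, 1 ≤ i → i ≤ N → ∀ t : ℝ, 0 ≤ t →
      ω i t = (k_β i / perfFn l_β ρβ_inf β_con t) *
        gainFn β_con β_con (β i t / perfFn l_β ρβ_inf β_con t) *
        epsErr β_con β_con (β i t / perfFn l_β ρβ_inf β_con t))
    (hinit : ∀ i, 1 ≤ i → i ≤ N →
      (d_col < d i 0 ∧ d i 0 < d_con) ∧ |β i 0| < β_con)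
    :
    ∀ i, 1 ≤ i → i ≤ N → ∀ t : ℝ, 0 ≤ t →
      (-(d_des i - d_col) *
          perfFn l_d ρd_inf (max (d_des i - d_col) (d_con - d_des i)) t <
            d i t - d_des i ∧
        d i t - d_des i <
          (d_con - d_des i) *
            perfFn l_d ρd_inf (max (d_des i - d_col) (d_con - d_des i)) t) ∧
      (-β_con * perfFn l_β ρβ_inf β_con t < β i t ∧
        β i t < β_con * perfFn l_β ρβ_inf β_con t) ∧
      (d_col < d i t ∧ d i t < d_con ∧ |β i t| < β_con) :=
  platoon_prescribed_performance_general N d_col d_con β_con ρd_inf ρβ_inf l_d l_β d_des k_d k_β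
    hd_des hβ_con hβ_con' hl_d hl_β hρd hρd' hρβ hρβ' hk_d hk_β x y φ v ω hx hy hφ hlead d β hdiff
    hdpos hgx hgy hv hω hinit
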